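/- arXiv:1604.08179 — 3 statements merged into one kernel-verified Lean document; each statement's English description precedes it below -/
import Mathlib

section
/- If additionally c_A < A, then in every pairwise-stable connected graph G on V, every two distinct nodes of T_A are adjacent; that is, T_A induces a complete subgraph (the type-A clique). -/
open SimpleGraph Classical
open scoped ENNReal

noncomputable section

variable {V : Type*} [Fintype V] [DecidableEq V]

/-- The degree of node `i` in `G`. -/
def degE (G : SimpleGraph V) (i : V) : ℕ := (G.neighborSet i).ncard

/-- The hop distance between `i` and `j`, with value `+∞` for unreachable pairs. -/
def dE (G : SimpleGraph V) (i j : V) : ℝ≥0∞ :=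
  if G.Reachable i j then (G.dist i j : ℝ≥0∞) else ⊤

/-- Basic model: the cost of node `i`, where a node of type A (in `TA`) pays link
cost `cA`, a node of type B (not in `TA`) pays `cB`, distances to type-A nodes are
weighted by `A` and to type-B nodes by `1`. -/
def cost (TA : Finset V) (A cA cB : ℝ) (G : SimpleGraph V) (i : V) : ℝ≥0∞ :=
  (degE G i : ℝ≥0∞) * ENNReal.ofReal (if i ∈ TA then cA else cB)
    + ENNReal.ofReal A * ∑ j ∈ TA, dE G i j
    + ∑ j ∈ TAᶜ, dE G i j

/-- `G` with the edge `ij` removed. -/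
def delE (G : SimpleGraph V) (i j : V) : SimpleGraph V := G.deleteEdges {s(i, j)}

/-- `G` with the edge `ij` added. -/
def addE (G : SimpleGraph V) (i j : V) : SimpleGraph V := G ⊔ edge i j

/-- Pairwise stability: removing any present edge strictly increases the cost of both
endpoints, and adding any absent edge strictly increases the cost of at least one
endpoint. -/
def PairwiseStable (TA : Finset V) (A cA cB : ℝ) (G : SimpleGraph V) : Prop :=
  (∀ i j : V, G.Adj i j →
    cost TA A cA cB G i < cost TA A cA cB (delE G i j) i ∧
    cost TA A cA cB G j < cost TA A cA cB (delE G i j) j) ∧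
  (∀ i j : V, i ≠ j → ¬ G.Adj i j →
    cost TA A cA cB G i < cost TA A cA cB (addE G i j) i ∨
    cost TA A cA cB G j < cost TA A cA cB (addE G i j) j)

/-!
If two type-A nodes `i`, `j` were not adjacent, adding the link `ij` would cost `i` the
amount `c_A`, but would shrink its distance to `j` from at least `2` to `1`, saving at least
`A > c_A`; since adding an edge never lengthens any other distance, the cost of `i` does not
go up, and symmetrically for `j`. This contradicts pairwise stability.
-/

section

variable {G H : SimpleGraph V} {i j : V}

lemma dE_anti (hle : G ≤ H) (u v : V) : dE H u v ≤ dE G u v := by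
  unfold dE
  by_cases hGr : G.Reachable u v
  · rw [if_pos hGr, if_pos (hGr.mono hle)]
    exact_mod_cast hGr.dist_anti hle
  · rw [if_neg hGr]
    exact le_top

lemma two_le_dE (hne : i ≠ j) (hnadj : ¬ G.Adj i j) : 2 ≤ dE G i j := by
  unfold dE
  split_ifs with hr
  · have h0 : G.dist i j ≠ 0 := fun h =>
      hne ((dist_eq_zero_iff_eq_or_not_reachable.mp h).resolve_right (not_not.mpr hr))
    have h1 : G.dist i j ≠ 1 := fun h => hnadj (dist_eq_one_iff_adj.mp h)
    exact_mod_cast (show 2 ≤ G.dist i j by omega)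
  · exact le_top

omit [Fintype V] [DecidableEq V] in
lemma le_addE : G ≤ addE G i j := le_sup_left

omit [Fintype V] [DecidableEq V] in
lemma addE_comm : addE G i j = addE G j i := by
  unfold addE edge
  rw [Sym2.eq_swap]

omit [Fintype V] [DecidableEq V] in
lemma addE_adj (hne : i ≠ j) : (addE G i j).Adj i j :=
  Or.inr ((edge_adj _ _ _ _).mpr ⟨Or.inl ⟨rfl, rfl⟩, hne⟩)

lemma dE_addE (hne : i ≠ j) : dE (addE G i j) i j = 1 := by
  unfold dE
  rw [if_pos (addE_adj hne).reachable, dist_eq_one_iff_adj.mpr (addE_adj hne)]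
  norm_num

omit [DecidableEq V] in
lemma degE_addE (hne : i ≠ j) (hnadj : ¬ G.Adj i j) :
    degE (addE G i j) i = degE G i + 1 := by
  have hnbr : (addE G i j).neighborSet i = insert j (G.neighborSet i) := by
    ext x
    simp only [mem_neighborSet, Set.mem_insert_iff, addE, sup_adj, edge_adj]
    aesop
  unfold degE
  rw [hnbr]
  exact Set.ncard_insert_of_notMem hnadj (Set.toFinite _)

lemma cost_addE_le (TA : Finset V) {A cA : ℝ} (cB : ℝ) (hcA : cA ≤ A)
    (hi : i ∈ TA) (hj : j ∈ TA) (hne : i ≠ j) (hnadj : ¬ G.Adj i j) :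
    cost TA A cA cB (addE G i j) i ≤ cost TA A cA cB G i := by
  set c := ENNReal.ofReal cA
  set a := ENNReal.ofReal A
  have hca : c ≤ a := ENNReal.ofReal_le_ofReal hcA
  have hsumA : ∑ k ∈ TA.erase j, dE (addE G i j) i k ≤ ∑ k ∈ TA.erase j, dE G i k :=
    Finset.sum_le_sum fun k _ => dE_anti le_addE i k
  have hsumB : ∑ k ∈ TAᶜ, dE (addE G i j) i k ≤ ∑ k ∈ TAᶜ, dE G i k :=
    Finset.sum_le_sum fun k _ => dE_anti le_addE i k
  have hsaving : c + a ≤ a * dE G i j :=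
    calc c + a ≤ a * 2 := by rw [mul_two]; gcongr
      _ ≤ a * dE G i j := by gcongr; exact two_le_dE hne hnadj
  unfold cost
  rw [if_pos hi, degE_addE hne hnadj, ← Finset.add_sum_erase TA _ hj,
    ← Finset.add_sum_erase TA (dE G i) hj, dE_addE hne]
  push_cast
  calc ((degE G i : ℝ≥0∞) + 1) * c + a * (1 + ∑ k ∈ TA.erase j, dE (addE G i j) i k)
        + ∑ k ∈ TAᶜ, dE (addE G i j) i k
      = (degE G i : ℝ≥0∞) * c + ((c + a) + a * ∑ k ∈ TA.erase j, dE (addE G i j) i k)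
        + ∑ k ∈ TAᶜ, dE (addE G i j) i k := by ring
    _ ≤ (degE G i : ℝ≥0∞) * c + ((c + a) + a * ∑ k ∈ TA.erase j, dE G i k)
        + ∑ k ∈ TAᶜ, dE G i k := by gcongr
    _ ≤ (degE G i : ℝ≥0∞) * c + a * (dE G i j + ∑ k ∈ TA.erase j, dE G i k)
        + ∑ k ∈ TAᶜ, dE G i k := by
          rw [mul_add]
          gcongr

end

theorem stmt3_general (TA : Finset V) (A cA cB : ℝ)
    (hcAA : cA < A)
    (G : SimpleGraph V)
    (hstable : PairwiseStable TA A cA cB G) :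
    ∀ i ∈ TA, ∀ j ∈ TA, i ≠ j → G.Adj i j := by
  intro i hi j hj hne
  by_contra hnadj
  have hcost_i := cost_addE_le TA cB hcAA.le hi hj hne hnadj
  have hcost_j := cost_addE_le TA cB hcAA.le hj hi hne.symm (fun h => hnadj h.symm)
  rw [addE_comm] at hcost_j
  rcases hstable.2 i j hne hnadj with h | h
  · exact hcost_i.not_gt h
  · exact hcost_j.not_gt h

/-- If additionally `c_A < A`, then in every pairwise-stable connected
graph every two distinct nodes of `T_A` are adjacent: `T_A` induces a complete subgraph. -/
theorem stmt3 (TA : Finset V) (A cA cB : ℝ)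
    (hA : 1 < A) (hcA : 1 < cA) (hAB : cA ≤ cB) (hcAA : cA < A)
    (G : SimpleGraph V) (hconn : G.Connected)
    (hstable : PairwiseStable TA A cA cB G) :
    ∀ i ∈ TA, ∀ j ∈ TA, i ≠ j → G.Adj i j :=
  stmt3_general TA A cA cB hcAA G hstable

end
end

section
/- Let n ≥ 4, let G = K_n be the complete graph on n vertices, all of type A, and let e = ij be any edge. Then g_{K_n}(i,j) = 3, g_{K_n − e}(i,j) = 4, and g is unchanged on all other pairs; consequently, under the reliable cost with δ = 1, C_rel(i, K_n − e) − C_rel(i, K_n) = A/2 − c_A. Hence removing any edge strictly increases the cost of its endpoints if and only if c_A < A/2; i.e., when failures are frequent (δ = 1), the type-A players' complete graph is stable against edge removals if and only if c_A < A/2. -/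
open SimpleGraph Classical
open scoped ENNReal

noncomputable section

variable {V : Type*} [Fintype V] [DecidableEq V]

/-- `g_G(i,j)`: the minimum of `length p + length q` over pairs `(p, q)` of
edge-disjoint `i`–`j` paths (equivalently, the length of a shortest cycle through `i`
and `j`), with value `+∞` if no such pair exists. -/
def gdist (G : SimpleGraph V) (i j : V) : ℝ≥0∞ :=
  sInf {n : ℝ≥0∞ | ∃ p q : G.Path i j,
    (∀ e ∈ (p : G.Walk i j).edges, e ∉ (q : G.Walk i j).edges) ∧
    n = ((p : G.Walk i j).length : ℝ≥0∞) + ((q : G.Walk i j).length : ℝ≥0∞)}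

/-- The reliable cost of node `i` under symmetric reliability requirements (`τ = 1`)
with failure weight `δ = 1`. -/
def costRel (TA : Finset V) (A cA cB : ℝ) (G : SimpleGraph V) (i : V) : ℝ≥0∞ :=
  (degE G i : ℝ≥0∞) * ENNReal.ofReal (if i ∈ TA then cA else cB)
    + ENNReal.ofReal (A / 2) * ∑ j ∈ TA.erase i, gdist G i j
    + ENNReal.ofReal (1 / 2) * ∑ j ∈ TAᶜ.erase i, gdist G i j

/-- Pairwise stability for the reliable model: removing any present edge strictly
increases the reliable cost of both endpoints, and adding any absent edge strictly
increases the reliable cost of at least one endpoint. -/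
def PairwiseStableRel (TA : Finset V) (A cA cB : ℝ) (G : SimpleGraph V) : Prop :=
  (∀ i j : V, G.Adj i j →
    costRel TA A cA cB G i < costRel TA A cA cB (delE G i j) i ∧
    costRel TA A cA cB G j < costRel TA A cA cB (delE G i j) j) ∧
  (∀ i j : V, i ≠ j → ¬ G.Adj i j →
    costRel TA A cA cB G i < costRel TA A cA cB (addE G i j) i ∨
    costRel TA A cA cB G j < costRel TA A cA cB (addE G i j) j)

/-- The reliable cost (`δ = 1`) of a type-A node `i` when all vertices are of type A:
`C_rel(i,G) = deg_G(i)·c_A + (A/2)·∑_{j ≠ i} g_G(i,j)`. -/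
def CrelA (A cA : ℝ) (G : SimpleGraph V) (i : V) : ℝ≥0∞ :=
  (degE G i : ℝ≥0∞) * ENNReal.ofReal cA
    + ENNReal.ofReal (A / 2) * ∑ j ∈ Finset.univ.erase i, gdist G i j

end

/-!
Two edge-disjoint `u`–`v` paths cannot both be the single edge `uv`, so `g(u,v) ≥ 3` whenever
`u ≠ v`, and `g(u,v) ≥ 4` when `u` and `v` are not adjacent, since then both paths have length
at least `2`. In `K_n` every pair lies on a triangle, so `g = 3`. In `K_n - ij` the pair `ij`
lies on the `4`-cycle `i w₁ j w₂`, and for `n ≥ 4` every other pair still lies on a triangle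
avoiding `ij`. Hence deleting `ij` lowers `deg i` by one and raises `∑ⱼ g(i,j)` by one, so
`C_rel(i, K_n - ij) + c_A = C_rel(i, K_n) + A/2`; as `C_rel(i, K_n)` is finite, the deletion
raises the cost exactly when `c_A < A/2`.
-/

section delE

variable {V : Type*} {i j u v : V}

@[simp]
lemma delE_top_adj : (delE ⊤ i j).Adj u v ↔ u ≠ v ∧ s(u, v) ≠ s(i, j) := by
  simp [delE]

lemma delE_comm (G : SimpleGraph V) (u v : V) : delE G u v = delE G v u := by
  rw [delE, Sym2.eq_swap, ← delE]

end delE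

section gdist

variable {V : Type*} {G : SimpleGraph V} {u v w : V}

lemma le_gdist {n : ℕ}
    (h : ∀ p q : G.Path u v, (∀ e ∈ (p : G.Walk u v).edges, e ∉ (q : G.Walk u v).edges) →
      n ≤ (p : G.Walk u v).length + (q : G.Walk u v).length) :
    (n : ℝ≥0∞) ≤ gdist G u v := by
  refine le_sInf ?_
  rintro _ ⟨p, q, hpq, rfl⟩
  exact_mod_cast h p q hpq

lemma gdist_le {p q : G.Walk u v} (hp : p.IsPath) (hq : q.IsPath)
    (hpq : ∀ e ∈ p.edges, e ∉ q.edges) : gdist G u v ≤ p.length + q.length :=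
  sInf_le ⟨⟨p, hp⟩, ⟨q, hq⟩, hpq, rfl⟩

lemma one_le_length_of_ne (huv : u ≠ v) (p : G.Walk u v) : 1 ≤ p.length :=
  Nat.one_le_iff_ne_zero.2 fun h => huv (Walk.eq_of_length_eq_zero h)

lemma three_le_gdist (huv : u ≠ v) : 3 ≤ gdist G u v := by
  suffices h : ((3 : ℕ) : ℝ≥0∞) ≤ gdist G u v by exact_mod_cast h
  refine le_gdist fun p q hpq => ?_
  have hp := one_le_length_of_ne huv (p : G.Walk u v)
  have hq := one_le_length_of_ne huv (q : G.Walk u v)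
  by_contra! hlt
  have hpq_eq : (p : G.Walk u v) = q := Walk.eq_of_length_le_one (by omega) (by omega)
  have hnil : (p : G.Walk u v).edges = [] :=
    List.eq_nil_iff_forall_not_mem.2 fun e he => hpq e he (hpq_eq ▸ he)
  simp [← Walk.length_edges, hnil] at hp

lemma four_le_gdist_of_not_adj (huv : u ≠ v) (hadj : ¬ G.Adj u v) : 4 ≤ gdist G u v := by
  have two_le : ∀ p : G.Walk u v, 2 ≤ p.length := fun p => by
    have := one_le_length_of_ne huv p
    by_contra! h
    exact hadj (Walk.adj_of_length_eq_one (p := p) (by omega))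
  suffices h : ((4 : ℕ) : ℝ≥0∞) ≤ gdist G u v by exact_mod_cast h
  refine le_gdist fun p q _ => ?_
  have := two_le p
  have := two_le q
  omega

lemma gdist_le_three (huv : G.Adj u v) (huw : G.Adj u w) (hwv : G.Adj w v) :
    gdist G u v ≤ 3 := by
  refine (gdist_le (p := huv.toWalk) (q := .cons huw hwv.toWalk) huv.isPath_toWalk
    (hwv.isPath_toWalk.cons (by simp [huw.ne, huv.ne])) (by simp [huw.ne, hwv.ne'])).trans_eq ?_
  norm_num

lemma gdist_le_four (huv : u ≠ v) {w₁ w₂ : V} (hw : w₁ ≠ w₂) (h₁ : G.Adj u w₁)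
    (h₁' : G.Adj w₁ v) (h₂ : G.Adj u w₂) (h₂' : G.Adj w₂ v) : gdist G u v ≤ 4 := by
  refine (gdist_le (p := .cons h₁ h₁'.toWalk) (q := .cons h₂ h₂'.toWalk)
    (h₁'.isPath_toWalk.cons (by simp [h₁.ne, huv])) (h₂'.isPath_toWalk.cons (by simp [h₂.ne, huv]))
    (by simp [hw, huv, h₁.ne', h₁'.ne, h₂.ne])).trans_eq ?_
  norm_num

end gdist

section completeGraph

variable {V : Type*} [Fintype V] {i j u v : V}

lemma exists_notMem_of_card_lt (s : Finset V) (h : s.card < Fintype.card V) : ∃ w, w ∉ s :=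
  let ⟨w, _, hw⟩ := Finset.exists_mem_notMem_of_card_lt_card (t := Finset.univ) h
  ⟨w, hw⟩

lemma gdist_top (hV : 3 ≤ Fintype.card V) (huv : u ≠ v) : gdist (⊤ : SimpleGraph V) u v = 3 := by
  obtain ⟨w, hw⟩ := exists_notMem_of_card_lt {u, v} (Finset.card_le_two.trans_lt hV)
  simp only [Finset.mem_insert, Finset.mem_singleton, not_or] at hw
  exact le_antisymm (gdist_le_three (w := w) (by simpa) (by simpa [eq_comm] using hw.1)
    (by simpa using hw.2)) (three_le_gdist huv)

lemma gdist_delE_top_self (hV : 4 ≤ Fintype.card V) (hij : i ≠ j) :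
    gdist (delE ⊤ i j) i j = 4 := by
  obtain ⟨w₁, hw₁⟩ := exists_notMem_of_card_lt {i, j} (Finset.card_le_two.trans_lt (by omega))
  obtain ⟨w₂, hw₂⟩ := exists_notMem_of_card_lt {i, j, w₁} (Finset.card_le_three.trans_lt hV)
  simp only [Finset.mem_insert, Finset.mem_singleton, not_or] at hw₁ hw₂
  refine le_antisymm (gdist_le_four hij (w₁ := w₁) (w₂ := w₂) ?_ ?_ ?_ ?_ ?_)
    (four_le_gdist_of_not_adj hij (by simp))
  all_goals grind [delE_top_adj, Sym2.eq_iff]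

lemma gdist_delE_top_of_ne (hV : 4 ≤ Fintype.card V) (huv : u ≠ v) (hs : s(u, v) ≠ s(i, j)) :
    gdist (delE ⊤ i j) u v = 3 := by
  -- if `i ∈ {u, v}` then `j ∉ {u, v}`, and avoiding that vertex keeps the triangle `u w v` off `ij`
  obtain ⟨w, hw⟩ := exists_notMem_of_card_lt {u, v, if i = u ∨ i = v then j else i}
    (Finset.card_le_three.trans_lt hV)
  simp only [Finset.mem_insert, Finset.mem_singleton, not_or] at hw
  refine le_antisymm (gdist_le_three (w := w) ?_ ?_ ?_) (three_le_gdist huv)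
  all_goals grind [delE_top_adj, Sym2.eq_iff]

lemma degE_delE_top_add_one (huv : u ≠ v) :
    degE (delE (⊤ : SimpleGraph V) u v) u + 1 = degE (⊤ : SimpleGraph V) u := by
  have hnbr : (delE (⊤ : SimpleGraph V) u v).neighborSet u =
      (⊤ : SimpleGraph V).neighborSet u \ {v} := by
    ext x
    simp only [mem_neighborSet, delE_top_adj, top_adj, Set.mem_sdiff, Set.mem_singleton_iff]
    grind [Sym2.eq_iff]
  rw [degE, degE, hnbr]
  exact Set.ncard_sdiff_singleton_add_one (by simpa using huv.symm)

end completeGraph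

namespace ENNReal

lemma lt_iff_lt_of_add_eq_add {a b c d : ℝ≥0∞} (hb : b ≠ ⊤) (hc : c ≠ ⊤) (h : a + c = b + d) :
    b < a ↔ c < d := by
  constructor
  · intro hba
    have hlt := ENNReal.add_lt_add_right hc hba
    rw [h] at hlt
    exact lt_of_add_lt_add_left hlt
  · intro hcd
    have hlt := ENNReal.add_lt_add_left hb hcd
    rw [← h] at hlt
    exact lt_of_add_lt_add_right hlt

end ENNReal

section cost

variable {V : Type*} [Fintype V] [DecidableEq V] {u v : V}

lemma sum_gdist_delE_top (hV : 4 ≤ Fintype.card V) (huv : u ≠ v) :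
    ∑ j ∈ Finset.univ.erase u, gdist (delE ⊤ u v) u j
      = ∑ j ∈ Finset.univ.erase u, gdist ⊤ u j + 1 := by
  have hv : v ∈ Finset.univ.erase u := by simpa using huv.symm
  have hrest : ∀ j ∈ (Finset.univ.erase u).erase v, gdist (delE ⊤ u v) u j = gdist ⊤ u j := by
    intro j hj
    simp only [Finset.mem_erase, Finset.mem_univ, and_true] at hj
    rw [gdist_delE_top_of_ne hV hj.2.symm (by simp [hj.1, huv]),
      gdist_top (by omega) hj.2.symm]
  rw [← Finset.add_sum_erase _ _ hv, ← Finset.add_sum_erase _ _ hv, gdist_delE_top_self hV huv,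
    gdist_top (by omega) huv, Finset.sum_congr rfl hrest, add_right_comm]
  norm_num

lemma CrelA_delE_top_add (hV : 4 ≤ Fintype.card V) (A cA : ℝ) (huv : u ≠ v) :
    CrelA A cA (delE ⊤ u v) u + ENNReal.ofReal cA = CrelA A cA ⊤ u + ENNReal.ofReal (A / 2) := by
  rw [CrelA, CrelA, sum_gdist_delE_top hV huv, ← degE_delE_top_add_one huv]
  push_cast
  ring

lemma CrelA_top_ne_top (hV : 3 ≤ Fintype.card V) (A cA : ℝ) (u : V) :
    CrelA A cA ⊤ u ≠ ⊤ := by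
  have hsum : ∑ j ∈ Finset.univ.erase u, gdist (⊤ : SimpleGraph V) u j ≠ ⊤ :=
    ENNReal.sum_ne_top.2 fun j hj => by
      rw [gdist_top hV (Finset.ne_of_mem_erase hj).symm]
      exact ENNReal.ofNat_ne_top
  simp [CrelA, ENNReal.mul_ne_top, hsum]

lemma CrelA_top_lt_delE_top_iff (hV : 4 ≤ Fintype.card V) {A : ℝ} (hA : 0 < A) (cA : ℝ)
    (huv : u ≠ v) : CrelA A cA ⊤ u < CrelA A cA (delE ⊤ u v) u ↔ cA < A / 2 :=
  (ENNReal.lt_iff_lt_of_add_eq_add (CrelA_top_ne_top (by omega) A cA u) ENNReal.ofReal_ne_top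
    (CrelA_delE_top_add hV A cA huv)).trans (ENNReal.ofReal_lt_ofReal_iff (by positivity))

end cost

theorem stmt14_general (n : ℕ) (hn : 4 ≤ n) (A cA : ℝ) (hA : 1 < A)
    (i j : Fin n) (hij : i ≠ j) :
    gdist (⊤ : SimpleGraph (Fin n)) i j = 3 ∧
    gdist (delE (⊤ : SimpleGraph (Fin n)) i j) i j = 4 ∧
    (∀ u v : Fin n, u ≠ v → s(u, v) ≠ s(i, j) →
      gdist (delE (⊤ : SimpleGraph (Fin n)) i j) u v =
        gdist (⊤ : SimpleGraph (Fin n)) u v) ∧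
    (CrelA A cA (delE (⊤ : SimpleGraph (Fin n)) i j) i + ENNReal.ofReal cA =
      CrelA A cA (⊤ : SimpleGraph (Fin n)) i + ENNReal.ofReal (A / 2)) ∧
    ((∀ u v : Fin n, u ≠ v →
        CrelA A cA (⊤ : SimpleGraph (Fin n)) u <
          CrelA A cA (delE (⊤ : SimpleGraph (Fin n)) u v) u ∧
        CrelA A cA (⊤ : SimpleGraph (Fin n)) v <
          CrelA A cA (delE (⊤ : SimpleGraph (Fin n)) u v) v) ↔
      cA < A / 2) := by
  have hV : 4 ≤ Fintype.card (Fin n) := by simpa using hn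
  have hA₀ : 0 < A := zero_lt_one.trans hA
  refine ⟨gdist_top (by omega) hij, gdist_delE_top_self hV hij, fun u v huv hs => ?_,
    CrelA_delE_top_add hV A cA hij, fun h => ?_, fun h u v huv => ?_⟩
  · rw [gdist_delE_top_of_ne hV huv hs, gdist_top (by omega) huv]
  · exact (CrelA_top_lt_delE_top_iff hV hA₀ cA hij).1 (h i j hij).1
  · refine ⟨(CrelA_top_lt_delE_top_iff hV hA₀ cA huv).2 h, ?_⟩
    rw [delE_comm]
    exact (CrelA_top_lt_delE_top_iff hV hA₀ cA huv.symm).2 h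

/-- Let `n ≥ 4`, `G = K_n` (all vertices of type A) and `e = ij` any
edge. Then `g_{K_n}(i,j) = 3`, `g_{K_n - e}(i,j) = 4`, `g` is unchanged on all other
pairs, and `C_rel(i, K_n - e) - C_rel(i, K_n) = A/2 - c_A` (stated additively).
Hence removing any edge strictly increases the cost of both of its endpoints if and
only if `c_A < A/2`: the type-A complete graph is stable against edge removals iff
`c_A < A/2`. -/
theorem stmt14 (n : ℕ) (hn : 4 ≤ n) (A cA : ℝ) (hA : 1 < A) (hcA : 1 < cA)
    (i j : Fin n) (hij : i ≠ j) :
    gdist (⊤ : SimpleGraph (Fin n)) i j = 3 ∧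
    gdist (delE (⊤ : SimpleGraph (Fin n)) i j) i j = 4 ∧
    (∀ u v : Fin n, u ≠ v → s(u, v) ≠ s(i, j) →
      gdist (delE (⊤ : SimpleGraph (Fin n)) i j) u v =
        gdist (⊤ : SimpleGraph (Fin n)) u v) ∧
    (CrelA A cA (delE (⊤ : SimpleGraph (Fin n)) i j) i + ENNReal.ofReal cA =
      CrelA A cA (⊤ : SimpleGraph (Fin n)) i + ENNReal.ofReal (A / 2)) ∧
    ((∀ u v : Fin n, u ≠ v →
        CrelA A cA (⊤ : SimpleGraph (Fin n)) u <
          CrelA A cA (delE (⊤ : SimpleGraph (Fin n)) u v) u ∧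
        CrelA A cA (⊤ : SimpleGraph (Fin n)) v <
          CrelA A cA (delE (⊤ : SimpleGraph (Fin n)) u v) v) ↔
      cA < A / 2) :=
  stmt14_general n hn A cA hA i j hij
end

section
/- Assume 1 < c_A ≤ c_B, |T_A| ≥ 3 and T_B nonempty. Let G** be the graph on V in which T_A induces a complete graph, every node of T_B is adjacent to every node of T_A, and no two nodes of T_B are adjacent. Then for any x ∈ T_A and b ∈ T_B, C_rel(x, G** − xb) − C_rel(x, G**) = 1/2 − c_A < 0. Hence G**, which is the socially optimal topology under symmetric reliability requirements, is not pairwise stable under the reliable cost (δ = 1, τ = 1): the price of stability of the reliable game exceeds 1. -/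
open SimpleGraph Classical
open scoped ENNReal

noncomputable section

variable {V : Type*} [Fintype V] [DecidableEq V]

/-- The graph `G**` in which `T_A` induces a complete graph, every node of `T_B` is
adjacent to every node of `T_A`, and no two nodes of `T_B` are adjacent. -/
def Gss (TA : Finset V) : SimpleGraph V :=
  SimpleGraph.fromRel (fun i j => i ∈ TA ∨ j ∈ TA)

end

/-! For distinct vertices `g ≥ 3`, and `g ≥ 4` for non-adjacent ones. In `G**` every major
player `x` lies on a triangle with every other vertex `j`, through a third major player, so
`g(x, j) = 3`. Deleting the link `xb` keeps all these triangles for `j ≠ b`, while `x` and `b`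
still have two common major neighbours, so only `g(x, b)` grows, from `3` to `4`. Hence `x` saves
`c_A` on the link and loses only `1/2` in reliability cost, so it would rather drop the link. -/

section EdgeDisjointPaths

variable {V : Type*} {G : SimpleGraph V} {i j k k' : V}

lemma SimpleGraph.Walk.mk_mem_edges_of_length_eq_one {w : G.Walk i j} (h : w.length = 1) :
    s(i, j) ∈ w.edges := by
  cases w with
  | nil => simp at h
  | cons _ w' =>
    cases w' with
    | nil => simp
    | cons _ _ => simp at h

lemma SimpleGraph.Walk.two_le_length (hij : i ≠ j) (hnadj : ¬ G.Adj i j) (w : G.Walk i j) :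
    2 ≤ w.length := by
  have h0 : w.length ≠ 0 := fun h => hij (w.eq_of_length_eq_zero h)
  have h1 : w.length ≠ 1 := fun h => hnadj (w.adj_of_length_eq_one h)
  omega

lemma gdist_le_length_add_length {p q : G.Walk i j} (hp : p.IsPath) (hq : q.IsPath)
    (hpq : ∀ e ∈ p.edges, e ∉ q.edges) : gdist G i j ≤ p.length + q.length :=
  sInf_le ⟨⟨p, hp⟩, ⟨q, hq⟩, hpq, rfl⟩

lemma le_gdist_s15 {n : ℕ}
    (h : ∀ p q : G.Walk i j, (∀ e ∈ p.edges, e ∉ q.edges) → n ≤ p.length + q.length) :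
    (n : ℝ≥0∞) ≤ gdist G i j := by
  refine le_sInf ?_
  rintro _ ⟨p, q, hpq, rfl⟩
  exact_mod_cast h p q hpq

lemma three_le_gdist_s15 (hij : i ≠ j) : 3 ≤ gdist G i j := by
  suffices ((3 : ℕ) : ℝ≥0∞) ≤ gdist G i j by exact_mod_cast this
  refine le_gdist_s15 fun p q hpq => ?_
  have hp : p.length ≠ 0 := fun h => hij (p.eq_of_length_eq_zero h)
  have hq : q.length ≠ 0 := fun h => hij (q.eq_of_length_eq_zero h)
  by_contra! hlt
  have hp1 : p.length = 1 := by omega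
  have hq1 : q.length = 1 := by omega
  exact hpq _ (p.mk_mem_edges_of_length_eq_one hp1) (q.mk_mem_edges_of_length_eq_one hq1)

lemma four_le_gdist (hij : i ≠ j) (hnadj : ¬ G.Adj i j) : 4 ≤ gdist G i j := by
  suffices ((4 : ℕ) : ℝ≥0∞) ≤ gdist G i j by exact_mod_cast this
  refine le_gdist_s15 fun p q _ => ?_
  have := p.two_le_length hij hnadj
  have := q.two_le_length hij hnadj
  omega

lemma gdist_le_three_s15 (hij : G.Adj i j) (hik : G.Adj i k) (hkj : G.Adj k j) :
    gdist G i j ≤ 3 := by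
  have hpath : (Walk.cons hik hkj.toWalk).IsPath := by
    simp [Walk.isPath_def, hij.ne, hik.ne, hkj.ne]
  have hdisj : ∀ e ∈ hij.toWalk.edges, e ∉ (Walk.cons hik hkj.toWalk).edges := by
    simp [hik.ne, hkj.ne.symm]
  exact (gdist_le_length_add_length hij.isPath_toWalk hpath hdisj).trans (by norm_num)

lemma gdist_le_four_s15 (hij : i ≠ j) (hkk' : k ≠ k') (hik : G.Adj i k) (hkj : G.Adj k j)
    (hik' : G.Adj i k') (hk'j : G.Adj k' j) : gdist G i j ≤ 4 := by
  have hpath : ∀ {m} (him : G.Adj i m) (hmj : G.Adj m j), (Walk.cons him hmj.toWalk).IsPath :=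
    fun him hmj => by simp [Walk.isPath_def, hij, him.ne, hmj.ne]
  have hdisj :
      ∀ e ∈ (Walk.cons hik hkj.toWalk).edges, e ∉ (Walk.cons hik' hk'j.toWalk).edges := by
    simp [hij, hkk', hik'.ne, hk'j.ne.symm]
  exact (gdist_le_length_add_length (hpath hik hkj) (hpath hik' hk'j) hdisj).trans
    (by norm_num)

lemma gdist_eq_three (hij : G.Adj i j) (hik : G.Adj i k) (hkj : G.Adj k j) :
    gdist G i j = 3 :=
  (gdist_le_three_s15 hij hik hkj).antisymm (three_le_gdist_s15 hij.ne)

lemma gdist_eq_four (hij : i ≠ j) (hnadj : ¬ G.Adj i j) (hkk' : k ≠ k') (hik : G.Adj i k)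
    (hkj : G.Adj k j) (hik' : G.Adj i k') (hk'j : G.Adj k' j) : gdist G i j = 4 :=
  (gdist_le_four_s15 hij hkk' hik hkj hik' hk'j).antisymm (four_le_gdist hij hnadj)

end EdgeDisjointPaths

lemma Finset.exists_mem_ne_ne {α : Type*} [DecidableEq α] {s : Finset α} (hs : 2 < s.card)
    (a b : α) : ∃ c ∈ s, c ≠ a ∧ c ≠ b := by
  obtain ⟨c, hc, hcb⟩ := (s.erase a).exists_mem_ne
    (by have := s.pred_card_le_card_erase (a := a); omega) b
  exact ⟨c, Finset.mem_of_mem_erase hc, Finset.ne_of_mem_erase hc, hcb⟩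

lemma delE_adj_of_ne {V : Type*} {G : SimpleGraph V} {x b u v : V} (h : G.Adj u v)
    (hvx : v ≠ x) (hvb : v ≠ b) : (delE G x b).Adj u v := by
  simp only [delE, deleteEdges_adj, Set.mem_singleton_iff, Sym2.eq_iff]
  tauto

lemma degE_delE_add_one {V : Type*} [Finite V] {G : SimpleGraph V} {x b : V}
    (h : G.Adj x b) : degE (delE G x b) x + 1 = degE G x := by
  have hnbr : (delE G x b).neighborSet x = G.neighborSet x \ {b} := by
    ext v
    simp only [mem_neighborSet, delE, deleteEdges_adj, Set.mem_singleton_iff, Set.mem_sdiff,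
      Sym2.eq_iff]
    have := h.ne
    tauto
  rw [degE, degE, hnbr]
  exact Set.ncard_sdiff_singleton_add_one h (Set.toFinite _)

lemma gss_adj {V : Type*} {TA : Finset V} {u v : V} :
    (Gss TA).Adj u v ↔ u ≠ v ∧ (u ∈ TA ∨ v ∈ TA) := by
  simp only [Gss, fromRel_adj]
  tauto

section CompleteSplitGraph

variable {V : Type*} [DecidableEq V] {TA : Finset V} {x b j : V}

lemma gdist_gss (hTA : 3 ≤ TA.card) (hx : x ∈ TA) (hjx : j ≠ x) : gdist (Gss TA) x j = 3 := by
  obtain ⟨k, hk, hkx, hkj⟩ := TA.exists_mem_ne_ne hTA x j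
  exact gdist_eq_three (gss_adj.2 ⟨hjx.symm, .inl hx⟩) (gss_adj.2 ⟨hkx.symm, .inl hx⟩)
    (gss_adj.2 ⟨hkj, .inl hk⟩)

lemma gdist_delE_gss (hTA : 3 ≤ TA.card) (hx : x ∈ TA) (hb : b ∉ TA) (hjx : j ≠ x)
    (hjb : j ≠ b) : gdist (delE (Gss TA) x b) x j = 3 := by
  obtain ⟨k, hk, hkx, hkj⟩ := TA.exists_mem_ne_ne hTA x j
  have hkb : k ≠ b := ne_of_mem_of_not_mem hk hb
  exact gdist_eq_three (delE_adj_of_ne (gss_adj.2 ⟨hjx.symm, .inl hx⟩) hjx hjb)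
    (delE_adj_of_ne (gss_adj.2 ⟨hkx.symm, .inl hx⟩) hkx hkb)
    (delE_adj_of_ne (gss_adj.2 ⟨hkj, .inl hk⟩) hjx hjb)

lemma gdist_delE_gss_self (hTA : 3 ≤ TA.card) (hx : x ∈ TA) (hb : b ∉ TA) :
    gdist (delE (Gss TA) x b) x b = 4 := by
  have hxb : x ≠ b := ne_of_mem_of_not_mem hx hb
  obtain ⟨k, hk, hkx, -⟩ := TA.exists_mem_ne_ne hTA x x
  obtain ⟨k', hk', hk'x, hk'k⟩ := TA.exists_mem_ne_ne hTA x k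
  have hadj : ∀ {m}, m ∈ TA → m ≠ x →
      (delE (Gss TA) x b).Adj x m ∧ (delE (Gss TA) x b).Adj m b := fun hm hmx =>
    ⟨delE_adj_of_ne (gss_adj.2 ⟨hmx.symm, .inl hx⟩) hmx (ne_of_mem_of_not_mem hm hb),
      (delE_adj_of_ne (gss_adj.2 ⟨(ne_of_mem_of_not_mem hm hb).symm, .inr hm⟩) hmx
        (ne_of_mem_of_not_mem hm hb)).symm⟩
  refine gdist_eq_four hxb ?_ hk'k.symm (hadj hk hkx).1 (hadj hk hkx).2 (hadj hk' hk'x).1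
    (hadj hk' hk'x).2
  simp [delE]

end CompleteSplitGraph

variable {V : Type*} [Fintype V] [DecidableEq V]

lemma costRel_delE_gss_add_ofReal (TA : Finset V) (A cA cB : ℝ) (hTA : 3 ≤ TA.card)
    {x b : V} (hx : x ∈ TA) (hb : b ∉ TA) :
    costRel TA A cA cB (delE (Gss TA) x b) x + ENNReal.ofReal cA =
      costRel TA A cA cB (Gss TA) x + ENNReal.ofReal (1 / 2) := by
  have hxb : x ≠ b := ne_of_mem_of_not_mem hx hb
  have hsumA : ∑ j ∈ TA.erase x, gdist (delE (Gss TA) x b) x j =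
      ∑ j ∈ TA.erase x, gdist (Gss TA) x j :=
    Finset.sum_congr rfl fun j hj => by
      have hjx := Finset.ne_of_mem_erase hj
      rw [gdist_delE_gss hTA hx hb hjx (ne_of_mem_of_not_mem (Finset.mem_of_mem_erase hj) hb),
        gdist_gss hTA hx hjx]
  have hsumB : ∑ j ∈ TAᶜ.erase x, gdist (delE (Gss TA) x b) x j =
      ∑ j ∈ TAᶜ.erase x, gdist (Gss TA) x j + 1 := by
    have hbB : b ∈ TAᶜ.erase x := Finset.mem_erase.2 ⟨hxb.symm, Finset.mem_compl.2 hb⟩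
    rw [← Finset.add_sum_erase _ _ hbB, ← Finset.add_sum_erase _ _ hbB,
      gdist_delE_gss_self hTA hx hb, gdist_gss hTA hx hxb.symm,
      Finset.sum_congr rfl fun j hj => gdist_delE_gss hTA hx hb
        (Finset.ne_of_mem_erase (Finset.mem_of_mem_erase hj)) (Finset.ne_of_mem_erase hj),
      Finset.sum_congr rfl fun j hj =>
        gdist_gss hTA hx (Finset.ne_of_mem_erase (Finset.mem_of_mem_erase hj))]
    norm_num [add_right_comm]
  rw [costRel, costRel, if_pos hx, hsumA, hsumB,
    ← degE_delE_add_one (gss_adj.2 ⟨hxb, .inl hx⟩)]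
  push_cast
  ring

lemma not_pairwiseStableRel_of_costRel_delE_le {TA : Finset V} {A cA cB : ℝ}
    {G : SimpleGraph V} {x b : V} (hadj : G.Adj x b)
    (hle : costRel TA A cA cB (delE G x b) x ≤ costRel TA A cA cB G x) :
    ¬ PairwiseStableRel TA A cA cB G :=
  fun hst => (hst.1 x b hadj).1.not_ge hle

theorem stmt15_general (TA : Finset V) (A cA cB : ℝ)
    (hcA : 1 < cA)
    (hTA : 3 ≤ TA.card) (hTB : TAᶜ.Nonempty) :
    (∀ x ∈ TA, ∀ b ∉ TA,
      costRel TA A cA cB (delE (Gss TA) x b) x + ENNReal.ofReal cA =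
        costRel TA A cA cB (Gss TA) x + ENNReal.ofReal (1 / 2)) ∧
    (1 / 2 - cA < 0) ∧
    ¬ PairwiseStableRel TA A cA cB (Gss TA) := by
  have hcost := fun x (hx : x ∈ TA) b (hb : b ∉ TA) =>
    costRel_delE_gss_add_ofReal TA A cA cB hTA hx hb
  refine ⟨hcost, by linarith, ?_⟩
  obtain ⟨x, hx⟩ := TA.card_pos.mp (by omega)
  obtain ⟨b, hb⟩ := hTB
  rw [Finset.mem_compl] at hb
  refine not_pairwiseStableRel_of_costRel_delE_le
    (gss_adj.2 ⟨ne_of_mem_of_not_mem hx hb, .inl hx⟩) ?_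
  refine ENNReal.le_of_add_le_add_right (ENNReal.ofReal_ne_top (r := cA)) ?_
  rw [hcost x hx b hb]
  gcongr
  linarith

/-- Assume `1 < c_A ≤ c_B`, `|T_A| ≥ 3` and `T_B` nonempty. For any
`x ∈ T_A` and `b ∈ T_B`, removing the edge `xb` from `G**` changes the reliable cost of
`x` by `1/2 - c_A < 0` (stated additively). Hence `G**`, the socially optimal topology
under symmetric reliability requirements, is not pairwise stable under the reliable
cost (`δ = 1`, `τ = 1`). -/
theorem stmt15 (TA : Finset V) (A cA cB : ℝ)
    (hA : 1 < A) (hcA : 1 < cA) (hAB : cA ≤ cB)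
    (hTA : 3 ≤ TA.card) (hTB : TAᶜ.Nonempty) :
    (∀ x ∈ TA, ∀ b ∉ TA,
      costRel TA A cA cB (delE (Gss TA) x b) x + ENNReal.ofReal cA =
        costRel TA A cA cB (Gss TA) x + ENNReal.ofReal (1 / 2)) ∧
    (1 / 2 - cA < 0) ∧
    ¬ PairwiseStableRel TA A cA cB (Gss TA) :=
  stmt15_general TA A cA cB hcA hTA hTB
end
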